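/- arXiv:1205.1279 — 3 statements merged into one kernel-verified Lean document; each statement's English description precedes it below -/
import Mathlib

section
/- Let (A_n, φ_{mn}) be an inverse system of abelian groups indexed by ℕ satisfying the Mittag-Leffler condition. Then lim¹ A_n = 0, i.e. the map ∏_n A_n → ∏_n A_n sending (a_n) to (a_n − φ_{n+1,n}(a_{n+1})) is surjective. -/
/-- An `ℕ`-indexed inverse system of abelian groups satisfying the Mittag-Leffler
condition has vanishing `lim¹`: the map `(a n) ↦ (a n - φ_{n+1,n} (a (n+1)))` on the
product is surjective. -/
theorem stmt_7 (A : ℕ → Type*) [∀ n, AddCommGroup (A n)]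
    (φ : ∀ ⦃m n : ℕ⦄, n ≤ m → (A m →+ A n))
    (hid : ∀ n, φ (le_refl n) = AddMonoidHom.id (A n))
    (hcomp : ∀ ⦃k m n : ℕ⦄ (h1 : n ≤ m) (h2 : m ≤ k),
      (φ h1).comp (φ h2) = φ (h1.trans h2))
    (hML : ∀ n : ℕ, ∃ N : ℕ, ∃ hN : n ≤ N, ∀ m : ℕ, ∀ hm : N ≤ m,
      (φ (hN.trans hm)).range = (φ hN).range) :
    Function.Surjective
      (fun a : (∀ n, A n) => fun n => a n - φ (Nat.le_succ n) (a (n + 1))) := by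
  have hc : ∀ {k m n : ℕ} (h1 : n ≤ m) (h2 : m ≤ k) (y : A k),
      φ h1 (φ h2 y) = φ (h1.trans h2) y := fun h1 h2 y =>
    DFunLike.congr_fun (hcomp h1 h2) y
  choose N hN himg using hML
  intro b
  -- truncated "telescope" summands
  let g : ∀ n j : ℕ, A n := fun n j => if h : n ≤ j then φ h (b j) else 0
  have hg : ∀ n j (h : n ≤ j), g n j = φ h (b j) := fun n j h => dif_pos h
  -- the stabilizing sequence
  let M : ℕ → ℕ := fun k => Nat.rec 0 (fun _ Mk => max (N Mk) (Mk + 1)) k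
  have hMS : ∀ k, M (k + 1) = max (N (M k)) (M k + 1) := fun _ => rfl
  have hMlt : ∀ k, M k < M (k + 1) := fun k => by
    rw [hMS]; exact lt_of_lt_of_le (Nat.lt_succ_self _) (le_max_right _ _)
  have hMle : ∀ k, M k ≤ M (k + 1) := fun k => (hMlt k).le
  have hNle : ∀ k, N (M k) ≤ M (k + 1) := fun k => by rw [hMS]; exact le_max_left _ _
  have hMge : ∀ k, k ≤ M k := by
    intro k; induction k with
    | zero => exact Nat.zero_le _
    | succ k ih => exact lt_of_le_of_lt ih (hMlt k)
  have hstab : ∀ k, (φ ((hMle k).trans (hMle (k + 1)))).range = (φ (hMle k)).range := by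
    intro k
    have e1 := himg (M k) (M (k + 2)) ((hNle k).trans (hMle (k + 1)))
    have e2 := himg (M k) (M (k + 1)) (hNle k)
    exact e1.trans e2.symm
  have hsurj : ∀ k, ∀ z ∈ (φ (hMle k)).range,
      ∃ w, w ∈ (φ (hMle (k + 1))).range ∧ φ (hMle k) w = z := by
    intro k z hz
    rw [← hstab k] at hz
    obtain ⟨u, hu⟩ := hz
    exact ⟨φ (hMle (k + 1)) u, ⟨u, rfl⟩, by rw [hc]; exact hu⟩
  let c : ∀ k, A (M k) := fun k => ∑ j ∈ Finset.Ico (M k) (M (k + 1)), g (M k) j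
  let e : ∀ k, {y : A (M k) // y ∈ (φ (hMle k)).range} := fun k =>
    Nat.rec ⟨0, zero_mem _⟩
      (fun k ek =>
        ⟨(hsurj k (ek.1 - φ (hMle k) (c (k + 1)))
            (sub_mem ek.2 ⟨c (k + 1), rfl⟩)).choose,
         (hsurj k (ek.1 - φ (hMle k) (c (k + 1)))
            (sub_mem ek.2 ⟨c (k + 1), rfl⟩)).choose_spec.1⟩) k
  have he : ∀ k, φ (hMle k) (e (k + 1)).1 = (e k).1 - φ (hMle k) (c (k + 1)) := fun k =>
    (hsurj k ((e k).1 - φ (hMle k) (c (k + 1)))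
      (sub_mem (e k).2 ⟨c (k + 1), rfl⟩)).choose_spec.2
  let x : ∀ k, A (M k) := fun k => c k + (e k).1
  have hx : ∀ k, x k = c k + φ (hMle k) (x (k + 1)) := by
    intro k
    show c k + (e k).1 = c k + φ (hMle k) (c (k + 1) + (e (k + 1)).1)
    rw [map_add, he k]
    abel
  let F : ∀ n k, n ≤ M (k + 1) → A n := fun n k hn =>
    (∑ j ∈ Finset.Ico n (M (k + 1)), g n j) + φ hn (x (k + 1))
  have hφc : ∀ n k (hn : n ≤ M (k + 1)),
      φ hn (c (k + 1)) = ∑ j ∈ Finset.Ico (M (k + 1)) (M (k + 2)), g n j := by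
    intro n k hn
    show φ hn (∑ j ∈ Finset.Ico (M (k + 1)) (M (k + 2)), g (M (k + 1)) j) = _
    rw [map_sum]
    refine Finset.sum_congr rfl fun j hj => ?_
    have hj' : M (k + 1) ≤ j := (Finset.mem_Ico.mp hj).1
    rw [hg _ _ hj', hg _ _ (hn.trans hj')]
    exact hc _ _ _
  have hF : ∀ n k (hn : n ≤ M (k + 1)),
      F n k hn = F n (k + 1) (hn.trans (hMle (k + 1))) := by
    intro n k hn
    show (∑ j ∈ Finset.Ico n (M (k + 1)), g n j) + φ hn (x (k + 1)) = _
    rw [hx (k + 1), map_add, hφc n k hn, hc, ← add_assoc,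
      Finset.sum_Ico_consecutive _ hn (hMle (k + 1))]
  refine ⟨fun n => F n n ((Nat.le_succ n).trans (hMge (n + 1))), ?_⟩
  funext n
  have hn1 : n + 1 ≤ M (n + 1) := hMge (n + 1)
  have hn0 : n ≤ M (n + 1) := (Nat.le_succ n).trans hn1
  show F n n hn0 - φ (Nat.le_succ n)
      (F (n + 1) (n + 1) ((Nat.le_succ (n + 1)).trans (hMge (n + 2)))) = b n
  rw [show F (n + 1) (n + 1) ((Nat.le_succ (n + 1)).trans (hMge (n + 2)))
      = F (n + 1) n hn1 from (hF (n + 1) n hn1).symm]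
  show (∑ j ∈ Finset.Ico n (M (n + 1)), g n j) + φ hn0 (x (n + 1)) -
      φ (Nat.le_succ n)
        ((∑ j ∈ Finset.Ico (n + 1) (M (n + 1)), g (n + 1) j) + φ hn1 (x (n + 1))) = b n
  have hsum : ∀ j ∈ Finset.Ico (n + 1) (M (n + 1)),
      φ (Nat.le_succ n) (g (n + 1) j) = g n j := by
    intro j hj
    have hj' : n + 1 ≤ j := (Finset.mem_Ico.mp hj).1
    rw [hg _ _ hj', hg _ _ ((Nat.le_succ n).trans hj')]
    exact hc _ _ _
  have hstep : ∀ y : A (M (n + 1)),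
      φ (Nat.le_succ n)
          ((∑ j ∈ Finset.Ico (n + 1) (M (n + 1)), g (n + 1) j) + φ hn1 y) =
        (∑ j ∈ Finset.Ico (n + 1) (M (n + 1)), g n j) + φ hn0 y := by
    intro y
    rw [map_add, map_sum, Finset.sum_congr rfl hsum, hc]
  rw [hstep (x (n + 1))]
  rw [Finset.sum_eq_sum_Ico_succ_bot (lt_of_lt_of_le (Nat.lt_succ_self n) hn1)]
  have hb : g n n = b n := by
    rw [hg n n (le_refl n), hid]; rfl
  rw [hb]
  abel
end

section
/- Let G be a finite abelian group admitting a nondegenerate alternating ℤ-bilinear pairing β : G × G → ℚ/ℤ. Then G is of symmetric type: there exists a finite abelian group H with G ≅ H × H. In particular, the order of G is a perfect square. -/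
/-!
Let `e` be the exponent of `G` and `g` an element of order `e`. The values of `β g ·` lie in the
cyclic subgroup of order `e` of `ℚ/ℤ`, and nondegeneracy forces them to fill it, so `β g h = 1/e`
for some `h`. Then `g` and `h` span a copy of `(ℤ/e)²`, and `G` is the direct sum of this plane
and of its orthogonal `{x | β g x = 0 ∧ β h x = 0}`, on which `β` is again alternating and
nondegenerate. By induction on `|G|`, the orthogonal is `H' × H'`, so `G ≅ (ℤ/e × H') × (ℤ/e × H')`.
-/

open AddSubgroup

namespace AddCircle

variable {𝕜 : Type*} [Field 𝕜] [LinearOrder 𝕜] [IsStrictOrderedRing 𝕜] {p : 𝕜} [Fact (0 < p)]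
  {n : ℕ}

theorem mem_zmultiples_of_nsmul_eq_zero (hn : 0 < n) {u : AddCircle p} (hu : n • u = 0) :
    u ∈ zmultiples ((p / n : 𝕜) : AddCircle p) := by
  obtain ⟨m, -, rfl⟩ := (AddCircle.nsmul_eq_zero_iff hn).mp hu
  exact ⟨m, by rw [natCast_div_mul_eq_nsmul, ← natCast_zsmul]⟩

theorem zsmul_period_div_eq_zero_iff (hn : 0 < n) (m : ℤ) :
    m • ((p / n : 𝕜) : AddCircle p) = 0 ↔ (m : ZMod n) = 0 := by
  rw [ZMod.intCast_zmod_eq_zero_iff_dvd, ← addOrderOf_dvd_iff_zsmul_eq_zero,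
    addOrderOf_period_div hn]

end AddCircle

namespace LinearMap

theorem separatingLeft_domRestrict₁₂_of_codisjoint {R M N : Type*} [CommSemiring R]
    [AddCommMonoid M] [Module R M] [AddCommMonoid N] [Module R N] {B : M →ₗ[R] M →ₗ[R] N}
    (hB : B.IsRefl) (hnd : B.SeparatingLeft) {P Q : Submodule R M} (hPQ : Codisjoint P Q)
    (hQ : Q ≤ P.orthogonalBilin B) : (B.domRestrict₁₂ Q Q).SeparatingLeft := by
  rintro ⟨x, hx⟩ hxQ
  rw [Submodule.mk_eq_zero]
  refine hnd x fun y => ?_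
  obtain ⟨p, hp, q, hq, rfl⟩ := Submodule.mem_sup.mp (hPQ.eq_top ▸ Submodule.mem_top : y ∈ P ⊔ Q)
  rw [map_add, hB _ _ (hQ hx p hp), zero_add]
  exact hxQ ⟨q, hq⟩

variable {G : Type*} [AddCommGroup G] {B : G →ₗ[ℤ] G →ₗ[ℤ] AddCircle (1 : ℚ)}

theorem exists_apply_eq_one_div_exponent [Finite G] (hB : B.SeparatingLeft) :
    ∃ g h : G, B g h = ((1 / AddMonoid.exponent G : ℚ) : AddCircle (1 : ℚ)) := by
  set e := AddMonoid.exponent G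
  have hexists : AddMonoid.ExponentExists G := .of_finite
  have he : 0 < e := AddMonoid.exponent_pos.mpr hexists
  obtain ⟨g, hg⟩ : ∃ g : G, addOrderOf g = e := AddMonoid.exists_addOrderOf_eq_exponent hexists
  let R : AddSubgroup (AddCircle (1 : ℚ)) := (B g).toAddMonoidHom.range
  let C : AddSubgroup (AddCircle (1 : ℚ)) := zmultiples ((1 / e : ℚ) : AddCircle (1 : ℚ))
  have hle : R ≤ C := by
    rintro _ ⟨y, rfl⟩
    refine AddCircle.mem_zmultiples_of_nsmul_eq_zero he ?_
    rw [toAddMonoidHom_coe, ← map_nsmul, AddMonoid.exponent_nsmul_eq_zero, map_zero]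
  have : Finite R := Finite.of_surjective _ (B g).toAddMonoidHom.rangeRestrict_surjective
  -- `Nat.card R` kills every value of `B g`, hence kills `g` by nondegeneracy.
  have hdvd : e ∣ Nat.card R := by
    rw [← hg]
    refine addOrderOf_dvd_of_nsmul_eq_zero (hB _ fun y => ?_)
    rw [map_nsmul, smul_apply]
    exact congrArg Subtype.val (card_nsmul_eq_zero' (G := R) (x := ⟨B g y, y, rfl⟩))
  have hcard : Nat.card C = e := by
    rw [Nat.card_zmultiples, AddCircle.addOrderOf_period_div he]
  have : Finite C := Nat.finite_of_card_ne_zero (by rw [hcard]; exact he.ne')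
  have hR : R = C := eq_of_le_of_card_ge hle (by rw [hcard]; exact Nat.le_of_dvd Nat.card_pos hdvd)
  obtain ⟨h, hh⟩ : ((1 / e : ℚ) : AddCircle (1 : ℚ)) ∈ R := hR ▸ mem_zmultiples _
  exact ⟨g, h, hh⟩

section HyperbolicPair

variable {e : ℕ} (he : ∀ x : G, e • x = 0) (g h : G)

def zmodPairHom : ZMod e × ZMod e →+ G :=
  (ZMod.lift e ⟨zmultiplesHom G g, by simp [he]⟩).coprod
    (ZMod.lift e ⟨zmultiplesHom G h, by simp [he]⟩)

theorem zmodPairHom_intCast (m k : ℤ) : zmodPairHom he g h (m, k) = m • g + k • h := by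
  simp [zmodPairHom, ZMod.lift_coe, zmultiplesHom_apply]

theorem ker_inf_ker_le_orthogonalBilin :
    ker (B g) ⊓ ker (B h) ≤ (range (zmodPairHom he g h).toIntLinearMap).orthogonalBilin B := by
  rintro x hx _ ⟨⟨m, k⟩, rfl⟩
  rw [Submodule.mem_inf, mem_ker, mem_ker] at hx
  obtain ⟨m, rfl⟩ := ZMod.intCast_surjective m
  obtain ⟨k, rfl⟩ := ZMod.intCast_surjective k
  simp [zmodPairHom_intCast, hx.1, hx.2]

variable {g h} (hB : B.IsAlt) (hgh : B g h = ((1 / e : ℚ) : AddCircle (1 : ℚ)))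
include hB hgh

theorem apply_zmodPairHom_left (m k : ℤ) :
    B g (zmodPairHom he g h (m, k)) = k • ((1 / e : ℚ) : AddCircle (1 : ℚ)) := by
  rw [zmodPairHom_intCast, map_add, map_zsmul, map_zsmul, hB g, hgh, smul_zero, zero_add]

theorem apply_zmodPairHom_right (m k : ℤ) :
    B h (zmodPairHom he g h (m, k)) = -(m • ((1 / e : ℚ) : AddCircle (1 : ℚ))) := by
  rw [zmodPairHom_intCast, map_add, map_zsmul, map_zsmul, hB h, ← hB.neg, hgh, smul_zero,
    add_zero, smul_neg]

variable [NeZero e]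

theorem eq_zero_of_zmodPairHom_mem {x : ZMod e × ZMod e}
    (hx : zmodPairHom he g h x ∈ ker (B g) ⊓ ker (B h)) : x = 0 := by
  obtain ⟨m, k⟩ := x
  obtain ⟨m, rfl⟩ := ZMod.intCast_surjective m
  obtain ⟨k, rfl⟩ := ZMod.intCast_surjective k
  rw [Submodule.mem_inf, mem_ker, mem_ker, apply_zmodPairHom_left he hB hgh,
    apply_zmodPairHom_right he hB hgh, neg_eq_zero,
    AddCircle.zsmul_period_div_eq_zero_iff (Nat.pos_of_neZero e),
    AddCircle.zsmul_period_div_eq_zero_iff (Nat.pos_of_neZero e)] at hx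
  rw [hx.1, hx.2, Prod.mk_zero_zero]

theorem injective_zmodPairHom : Function.Injective (zmodPairHom he g h) :=
  (injective_iff_map_eq_zero _).mpr fun _ hx =>
    eq_zero_of_zmodPairHom_mem he hB hgh (hx ▸ zero_mem _)

theorem isCompl_range_zmodPairHom :
    IsCompl (range (zmodPairHom he g h).toIntLinearMap) (ker (B g) ⊓ ker (B h)) := by
  refine ⟨Submodule.disjoint_def.mpr ?_, codisjoint_iff.mpr (eq_top_iff.mpr fun x _ => ?_)⟩
  · rintro _ ⟨x, rfl⟩ hx
    rw [eq_zero_of_zmodPairHom_mem he hB hgh hx, map_zero]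
  have hval (y : G) : ∃ k : ℤ, k • ((1 / e : ℚ) : AddCircle (1 : ℚ)) = B y x :=
    AddCircle.mem_zmultiples_of_nsmul_eq_zero (Nat.pos_of_neZero e)
      (by rw [← map_nsmul, he, map_zero])
  obtain ⟨k, hk⟩ := hval g
  obtain ⟨m, hm⟩ := hval h
  let p : ZMod e × ZMod e := (((-m : ℤ) : ZMod e), ((k : ℤ) : ZMod e))
  have hmem : x - zmodPairHom he g h p ∈ ker (B g) ⊓ ker (B h) := by
    rw [Submodule.mem_inf, mem_ker, mem_ker, map_sub, map_sub, apply_zmodPairHom_left he hB hgh,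
      apply_zmodPairHom_right he hB hgh, hk, neg_zsmul, neg_neg, hm, sub_self, sub_self]
    exact ⟨rfl, rfl⟩
  have := Submodule.add_mem_sup (mem_range_self (zmodPairHom he g h).toIntLinearMap p) hmem
  rwa [AddMonoidHom.coe_toIntLinearMap, add_sub_cancel] at this

end HyperbolicPair

universe u

theorem IsAlt.exists_addEquiv_prod_self {G : Type u} [AddCommGroup G] [Finite G]
    {B : G →ₗ[ℤ] G →ₗ[ℤ] AddCircle (1 : ℚ)} (hB : B.IsAlt) (hnd : B.SeparatingLeft) :
    ∃ (H : Type u) (_ : AddCommGroup H), Nonempty (G ≃+ H × H) := by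
  induction hn : Nat.card G using Nat.strong_induction_on generalizing G with
  | _ n ih =>
  rcases subsingleton_or_nontrivial G with hG | hG
  · let : Unique G := uniqueOfSubsingleton 0
    exact ⟨G, inferInstance, ⟨AddEquiv.prodUnique.symm⟩⟩
  set e := AddMonoid.exponent G
  have he1 : 1 < e := AddMonoid.one_lt_exponent
  have : NeZero e := ⟨by omega⟩
  have he : ∀ x : G, e • x = 0 := AddMonoid.exponent_nsmul_eq_zero
  obtain ⟨g, h, hgh⟩ := exists_apply_eq_one_div_exponent hnd
  set Q := ker (B g) ⊓ ker (B h)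
  have hcompl := isCompl_range_zmodPairHom he hB hgh
  let eqv : G ≃ₗ[ℤ] (ZMod e × ZMod e) × Q :=
    (Submodule.prodEquivOfIsCompl _ _ hcompl).symm ≪≫ₗ
      (LinearEquiv.ofInjective _ (injective_zmodPairHom he hB hgh)).symm.prodCongr
        (LinearEquiv.refl ℤ Q)
  have hcard : Nat.card Q < n := by
    rw [← hn, Nat.card_congr eqv.toEquiv, Nat.card_prod, Nat.card_prod, Nat.card_zmod]
    exact lt_mul_left Nat.card_pos (by nlinarith)
  obtain ⟨H, _, ⟨eQ⟩⟩ := ih _ hcard (B := B.domRestrict₁₂ Q Q) (fun x => hB x)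
    (separatingLeft_domRestrict₁₂_of_codisjoint hB.isRefl hnd hcompl.codisjoint
      (ker_inf_ker_le_orthogonalBilin he g h)) rfl
  exact ⟨ZMod e × H, inferInstance, ⟨eqv.toAddEquiv.trans
    (((AddEquiv.refl _).prodCongr eQ).trans (AddEquiv.prodProdProdComm _ _ _ _))⟩⟩

end LinearMap

theorem AddEquiv.exists_addSubgroup_addEquiv_prod_self {G H : Type*} [AddGroup G] [AddGroup H]
    (e : G ≃+ H × H) : ∃ S : AddSubgroup G, Nonempty (G ≃+ S × S) := by
  let f : H →+ G := (e.symm : H × H →+ G).comp (AddMonoidHom.inl H H)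
  have hf : Function.Injective f := e.symm.injective.comp (Prod.mk_left_injective 0)
  let eS : H ≃+ f.range := AddMonoidHom.ofInjective hf
  exact ⟨f.range, ⟨e.trans (eS.prodCongr eS)⟩⟩

/-- A finite abelian group admitting a nondegenerate alternating `ℤ`-bilinear pairing
with values in `ℚ/ℤ` is of symmetric type: `G ≅ H × H`; in particular `|G|` is a
perfect square. -/
theorem stmt_11 (G : Type*) [AddCommGroup G] [Fintype G]
    (β : G → G → AddCircle (1 : ℚ))
    (hl : ∀ x y z : G, β (x + y) z = β x z + β y z)
    (hr : ∀ x y z : G, β x (y + z) = β x y + β x z)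
    (halt : ∀ x : G, β x x = 0)
    (hnd : ∀ x : G, (∀ y : G, β x y = 0) → x = 0) :
    (∃ H : AddSubgroup G, Nonempty (G ≃+ H × H)) ∧
    ∃ k : ℕ, Fintype.card G = k * k := by
  let B : G →ₗ[ℤ] G →ₗ[ℤ] AddCircle (1 : ℚ) :=
    (AddMonoidHom.mk' (fun x => (AddMonoidHom.mk' (β x) (hr x)).toIntLinearMap)
      fun x y => LinearMap.ext (hl x y)).toIntLinearMap
  obtain ⟨H, _, ⟨e⟩⟩ := LinearMap.IsAlt.exists_addEquiv_prod_self (B := B) halt hnd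
  refine ⟨e.exists_addSubgroup_addEquiv_prod_self, Nat.card H, ?_⟩
  rw [← Nat.card_eq_fintype_card, Nat.card_congr e.toEquiv, Nat.card_prod]
end

section
/- Let p be a prime, r ≥ 1, let G be a finite abelian group of exponent dividing p^r with an alternating ℤ-bilinear pairing β : G × G → ℚ/ℤ, and suppose x ∈ G has order p^r and p^{r−1}·x is not in the radical of β. Then there exists y ∈ G such that the restriction of β to the subgroup H generated by x and y has the property that p^{r−1}·x is not in the radical of β|_H; consequently β|_H, as an element of the group of pairings on H, has order exactly p^r. -/
/-- If `G` is a finite abelian group of exponent dividing `p^r` with an alternating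
bilinear pairing `β`, and `x ∈ G` has order `p^r` with `p^{r-1}x` not in the radical
of `β`, then there is `y` such that on `H = ⟨x, y⟩` the element `p^{r-1}x` is not in
the radical of `β|_H`; consequently `β|_H` has order exactly `p^r` in the group of
pairings on `H`. -/
theorem stmt_16 (p : ℕ) (hp : p.Prime) (r : ℕ) (hr : 1 ≤ r)
    (G : Type*) [AddCommGroup G] [Finite G]
    (hexp : ∀ z : G, (p ^ r : ℕ) • z = 0)
    (β : G → G → AddCircle (1 : ℚ))
    (hl : ∀ x y z : G, β (x + y) z = β x z + β y z)
    (hrb : ∀ x y z : G, β x (y + z) = β x y + β x z)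
    (halt : ∀ x : G, β x x = 0)
    (x : G) (hx : addOrderOf x = p ^ r)
    (hxrad : ∃ w : G, β ((p ^ (r - 1) : ℕ) • x) w ≠ 0) :
    ∃ y : G,
      (∃ w ∈ AddSubgroup.closure {x, y}, β ((p ^ (r - 1) : ℕ) • x) w ≠ 0) ∧
      (∀ a ∈ AddSubgroup.closure {x, y}, ∀ b ∈ AddSubgroup.closure {x, y},
        (p ^ r : ℕ) • β a b = 0) ∧
      (∀ k : ℕ, 0 < k →
        (∀ a ∈ AddSubgroup.closure {x, y}, ∀ b ∈ AddSubgroup.closure {x, y},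
          k • β a b = 0) → p ^ r ∣ k) := by
  obtain ⟨w, hw⟩ := hxrad
  have hzero : ∀ b : G, β 0 b = 0 := by
    intro b
    have := hl 0 0 b
    rw [zero_add] at this
    exact (left_eq_add.mp this)
  have hsmul : ∀ (n : ℕ) (a b : G), β (n • a) b = n • β a b := by
    intro n a b
    induction n with
    | zero => simp [hzero]
    | succ m ih => rw [succ_nsmul, hl, ih, succ_nsmul]
  have hxmem : x ∈ AddSubgroup.closure {x, w} :=
    AddSubgroup.subset_closure (by simp)
  have hwmem : w ∈ AddSubgroup.closure {x, w} :=
    AddSubgroup.subset_closure (by simp)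
  refine ⟨w, ⟨w, hwmem, hw⟩, ?_, ?_⟩
  · intro a _ b _
    rw [← hsmul, hexp, hzero]
  · intro k hk hkz
    have h1 : k • β x w = 0 := hkz x hxmem w hwmem
    have h2 : (p ^ r : ℕ) • β x w = 0 := by rw [← hsmul, hexp, hzero]
    have h3 : (p ^ (r - 1) : ℕ) • β x w ≠ 0 := by rw [← hsmul]; exact hw
    have hdvd : addOrderOf (β x w) ∣ p ^ r := addOrderOf_dvd_of_nsmul_eq_zero h2
    obtain ⟨i, hi, hio⟩ := (Nat.dvd_prime_pow hp).mp hdvd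
    have hir : i = r := by
      by_contra hne
      have hile : i ≤ r - 1 := by omega
      have : (p ^ (r - 1) : ℕ) • β x w = 0 :=
        addOrderOf_dvd_iff_nsmul_eq_zero.mp (hio ▸ pow_dvd_pow p hile)
      exact h3 this
    have := addOrderOf_dvd_of_nsmul_eq_zero h1
    rwa [hio, hir] at this
end
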